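/- arXiv:1905.09273 — 3 statements merged into one kernel-verified Lean document; each statement's English description precedes it below -/
import Mathlib

section
/- For integers n ≥ 1, 0 ≤ t ≤ n-1, and any integer t', the sum ∑_{s=0}^{n-1} (-1)^s C(n-t-1, s-t) C(n-s, t') equals (-1)^t (δ_{t', n-t} + δ_{t', n-t-1}). -/
/-!
Only the terms with `t ≤ s` survive; putting `s = t + k` and `m = n - t - 1` leaves
`(-1)^t ∑_k (-1)^k C(m, k) C(m + 1 - k, t')`. This is the coefficient of `x^t'` in
`(1 + x) ((1 + x) - 1)^m = x^m + x^(m+1)`, expanded by the binomial theorem.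
-/

open Finset Polynomial

/-- Binomial coefficient C(a,b) for integer arguments, with the convention
    C(a,b) = 0 when b < 0 or b > a. -/
def intChoose (a b : ℤ) : ℤ :=
  if 0 ≤ b ∧ b ≤ a then (a.toNat.choose b.toNat : ℤ) else 0

theorem intChoose_natCast (a b : ℕ) : intChoose a b = a.choose b := by
  unfold intChoose
  split_ifs with h
  · simp
  · rw [Nat.choose_eq_zero_of_lt (by omega), Nat.cast_zero]

theorem intChoose_of_neg (a : ℤ) {b : ℤ} (hb : b < 0) : intChoose a b = 0 :=
  if_neg fun h => hb.not_ge h.1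

theorem Polynomial.alternating_sum_range_choose_mul_X_add_one_pow (m : ℕ) :
    ∑ k ∈ range (m + 1), C ((-1) ^ k * m.choose k : ℤ) * (X + 1) ^ (m + 1 - k) =
      X ^ m * (X + 1) := by
  have hX : (X : ℤ[X]) = -1 + (X + 1) := by ring
  rw [hX, add_pow, sum_mul, ← hX]
  refine sum_congr rfl fun k hk => ?_
  rw [show m + 1 - k = m - k + 1 by have := mem_range.mp hk; omega]
  simp only [map_mul, map_pow, map_neg, map_one, map_natCast]
  ring

theorem Int.alternating_sum_range_choose_mul_choose_succ_sub (m r : ℕ) :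
    ∑ k ∈ Finset.range (m + 1), (-1) ^ k * m.choose k * ((m + 1 - k).choose r : ℤ) =
      (if r = m + 1 then 1 else 0) + (if r = m then 1 else 0) := by
  simpa only [finsetSum_coeff, coeff_C_mul, coeff_X_add_one_pow, mul_add, mul_one, coeff_add,
    ← pow_succ, coeff_X_pow] using
    congrArg (coeff · r) (alternating_sum_range_choose_mul_X_add_one_pow m)

/-- ∑_{s=0}^{n-1} (-1)^s C(n-t-1, s-t) C(n-s, t') = (-1)^t (δ_{t', n-t} + δ_{t', n-t-1}),
    for n ≥ 1, 0 ≤ t ≤ n-1 and any integer t'. -/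
theorem binomial_sum_lemma_one (n : ℕ) (hn : 1 ≤ n) (t : ℕ) (ht : t ≤ n - 1) (t' : ℤ) :
    ∑ s ∈ Finset.range n,
        (-1 : ℤ) ^ s * intChoose ((n : ℤ) - t - 1) ((s : ℤ) - t) * intChoose ((n : ℤ) - s) t'
      = (-1 : ℤ) ^ t *
          ((if t' = (n : ℤ) - t then 1 else 0) + (if t' = (n : ℤ) - t - 1 then 1 else 0)) := by
  obtain ⟨m, rfl⟩ : ∃ m, n = t + (m + 1) := ⟨n - t - 1, by omega⟩
  rcases lt_or_ge t' 0 with ht' | ht'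
  · simp only [intChoose_of_neg _ ht', mul_zero, sum_const_zero]
    rw [if_neg (by omega), if_neg (by omega), add_zero, mul_zero]
  obtain ⟨r, rfl⟩ := Int.eq_ofNat_of_zero_le ht'
  have head_vanishes : ∀ s ∈ range t,
      (-1 : ℤ) ^ s * intChoose (↑(t + (m + 1)) - t - 1) (s - t) *
        intChoose (↑(t + (m + 1)) - s) r = 0 := fun s hs => by
    rw [intChoose_of_neg _ (by have := mem_range.mp hs; omega), mul_zero, zero_mul]
  have tail_shifted : ∀ k ∈ range (m + 1),
      (-1 : ℤ) ^ (t + k) * intChoose (↑(t + (m + 1)) - t - 1) (↑(t + k) - t) *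
        intChoose (↑(t + (m + 1)) - ↑(t + k)) r =
      (-1) ^ t * ((-1) ^ k * m.choose k * (m + 1 - k).choose r) := fun k hk => by
    have hk := mem_range.mp hk
    rw [show (↑(t + (m + 1)) - t - 1 : ℤ) = m by omega,
      show (↑(t + k) - t : ℤ) = k by omega,
      show (↑(t + (m + 1)) - ↑(t + k) : ℤ) = ↑(m + 1 - k) by omega,
      intChoose_natCast, intChoose_natCast, pow_add]
    ring
  rw [sum_range_add, sum_eq_zero head_vanishes, zero_add, sum_congr rfl tail_shifted,
    ← mul_sum, Int.alternating_sum_range_choose_mul_choose_succ_sub]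
  have at_succ : (r : ℤ) = ↑(t + (m + 1)) - t ↔ r = m + 1 := by omega
  have at_m : (r : ℤ) = ↑(t + (m + 1)) - t - 1 ↔ r = m := by omega
  simp only [at_succ, at_m]
end

section
/- Let x be a nonzero element of a field. Define M_{n;k,l} = a·P_{n,k+1,l}(x) + b·P_{n,k+1,l-1}(x) for fixed field constants a, b. Then c·M_{n+1;k+1,l} − M_{n;k,l-1} = c·M_{n+1;k,l} holds (with c = x) for all integers n ≥ 1, 0 ≤ k ≤ n-1, 0 ≤ l ≤ n+1, with M_{n;k,l-1} interpreted as 0 for l = 0. -/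
/-- P_{n,k,l}(x) = ∑_{s=0}^{l} (-1)^s C(n-k,s) C(n-s-1,l-s) x^{n-2s}, as a function of
    an (invertible) field element x; for l < 0 all terms vanish (the sum degenerates to
    the single s = 0 term containing C(n-1,l) = 0), so P_{n,k,l} = 0 for l < 0. -/
def Ppoly {K : Type*} [Field K] (x : K) (n k l : ℤ) : K :=
  ∑ s ∈ Finset.range (l.toNat + 1),
    (-1 : K) ^ s * (intChoose (n - k) (s : ℤ) : K) *
      (intChoose (n - (s : ℤ) - 1) (l - (s : ℤ)) : K) * x ^ (n - 2 * (s : ℤ))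

/-- M_{n;k,l} = a·P_{n,k+1,l}(x) + b·P_{n,k+1,l-1}(x) for fixed constants a, b. -/
def Mmat {K : Type*} [Field K] (x a b : K) (n k : ℕ) (l : ℤ) : K :=
  a * Ppoly x (n : ℤ) ((k : ℤ) + 1) l + b * Ppoly x (n : ℤ) ((k : ℤ) + 1) (l - 1)

/-!
Write `P_{n,k,l}` as a sum of terms `T_s`. Pascal's rule `C(m+1,s+1) - C(m,s+1) = C(m,s)` with
`m = n - k ≥ 0` gives `x (T_{s+1}(n+1,k+1,l) - T_{s+1}(n+1,k,l)) = T_s(n,k,l-1)`, while the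
two `s = 0` terms agree; summing yields `x (P_{n+1,k+1,l} - P_{n+1,k,l}) = P_{n,k,l-1}`.
Applied at `k + 1` and both `l` and `l - 1`, this is the recurrence for `M`.
-/

namespace intChoose

theorem of_nonneg {a b : ℤ} (ha : 0 ≤ a) (hb : 0 ≤ b) :
    intChoose a b = (a.toNat.choose b.toNat : ℤ) := by
  unfold intChoose
  by_cases h : b ≤ a
  · simp [hb, h]
  · simp [h, Nat.choose_eq_zero_of_lt (show a.toNat < b.toNat by omega)]

theorem of_neg (a : ℤ) {b : ℤ} (hb : b < 0) : intChoose a b = 0 := by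
  simp [intChoose, not_le.mpr hb]

theorem zero_right {a : ℤ} (ha : 0 ≤ a) : intChoose a 0 = 1 := by
  simp [of_nonneg ha le_rfl]

theorem succ_succ {a : ℤ} (ha : 0 ≤ a) (b : ℤ) :
    intChoose (a + 1) (b + 1) = intChoose a b + intChoose a (b + 1) := by
  rcases lt_trichotomy b (-1) with hb | rfl | hb
  · rw [of_neg _ (by omega), of_neg _ (by omega), of_neg _ (by omega), add_zero]
  · rw [neg_add_cancel, zero_right (by omega), zero_right ha, of_neg _ (by omega), zero_add]
  · rw [of_nonneg (by omega) (by omega), of_nonneg ha (by omega), of_nonneg ha (by omega),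
      show (a + 1).toNat = a.toNat + 1 by omega, show (b + 1).toNat = b.toNat + 1 by omega,
      Nat.choose_succ_succ, Nat.cast_add]

end intChoose

section Ppoly

variable {K : Type*} [Field K] (x : K)

def Pterm (n k l : ℤ) (s : ℕ) : K :=
  (-1 : K) ^ s * (intChoose (n - k) (s : ℤ) : K) *
    (intChoose (n - (s : ℤ) - 1) (l - (s : ℤ)) : K) * x ^ (n - 2 * (s : ℤ))

theorem Ppoly_eq_sum_Pterm (n k l : ℤ) :
    Ppoly x n k l = ∑ s ∈ Finset.range (l.toNat + 1), Pterm x n k l s :=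
  rfl

/-- `(l - 1).toNat + 1 = l.toNat` fails for `l ≤ 0`, but then the one term of the sum vanishes. -/
theorem Ppoly_sub_one_eq_sum_Pterm (n k l : ℤ) :
    Ppoly x n k (l - 1) = ∑ s ∈ Finset.range l.toNat, Pterm x n k (l - 1) s := by
  rw [Ppoly_eq_sum_Pterm]
  rcases le_or_gt l 0 with hl | hl
  · simp [show l.toNat = 0 by omega, show (l - 1).toNat = 0 by omega, Pterm,
      intChoose.of_neg _ (show l - 1 < 0 by omega)]
  · rw [show (l - 1).toNat + 1 = l.toNat by omega]

theorem Pterm_succ_zero {n k : ℤ} (hkn : k ≤ n) (l : ℤ) :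
    Pterm x (n + 1) (k + 1) l 0 = Pterm x (n + 1) k l 0 := by
  simp only [Pterm, show n + 1 - (k + 1) = n - k by ring, Nat.cast_zero,
    intChoose.zero_right (show 0 ≤ n - k by omega),
    intChoose.zero_right (show 0 ≤ n + 1 - k by omega)]

theorem mul_Pterm_succ_sub {n k : ℤ} (hx : x ≠ 0) (hkn : k ≤ n) (l : ℤ) (s : ℕ) :
    x * (Pterm x (n + 1) (k + 1) l (s + 1) - Pterm x (n + 1) k l (s + 1))
      = Pterm x n k (l - 1) s := by
  unfold Pterm
  push_cast
  rw [show n + 1 - (k + 1) = n - k by ring, show n + 1 - k = n - k + 1 by ring,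
    intChoose.succ_succ (show 0 ≤ n - k by omega),
    show n + 1 - (s + 1) - 1 = n - s - 1 by ring, show l - (s + 1) = l - 1 - s by ring,
    show n + 1 - 2 * (s + 1) = n - 2 * s - 1 by ring, zpow_sub_one₀ hx]
  push_cast
  field_simp
  ring

theorem mul_Ppoly_succ_sub {n k : ℤ} (hx : x ≠ 0) (hkn : k ≤ n) (l : ℤ) :
    x * (Ppoly x (n + 1) (k + 1) l - Ppoly x (n + 1) k l) = Ppoly x n k (l - 1) := by
  rw [Ppoly_eq_sum_Pterm, Ppoly_eq_sum_Pterm, Ppoly_sub_one_eq_sum_Pterm,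
    ← Finset.sum_sub_distrib, Finset.mul_sum, Finset.sum_range_succ', Pterm_succ_zero x hkn,
    sub_self, mul_zero, add_zero]
  exact Finset.sum_congr rfl fun s _ => mul_Pterm_succ_sub x hx hkn l s

end Ppoly

theorem Mmat_recurrence_two_general {K : Type*} [Field K] (x : K) (hx0 : x ≠ 0)
    (a b : K) (n k l : ℕ) (hn : 1 ≤ n) (hk : k ≤ n - 1) :
    x * Mmat x a b (n + 1) (k + 1) (l : ℤ) - Mmat x a b n k ((l : ℤ) - 1)
      = x * Mmat x a b (n + 1) k (l : ℤ) := by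
  have hkn : (k : ℤ) + 1 ≤ n := by omega
  have hP := mul_Ppoly_succ_sub x hx0 hkn (l : ℤ)
  have hP' := mul_Ppoly_succ_sub x hx0 hkn ((l : ℤ) - 1)
  unfold Mmat
  push_cast
  linear_combination a * hP + b * hP'

/-- The recurrence c·M_{n+1;k+1,l} − M_{n;k,l-1} = c·M_{n+1;k,l} (with c = x), for
    n ≥ 1, 0 ≤ k ≤ n-1, 0 ≤ l ≤ n+1; for l = 0 the term M_{n;k,l-1} vanishes
    automatically since P_{n,k,l} = 0 for l < 0. -/
theorem Mmat_recurrence_two {K : Type*} [Field K] (x : K) (hx0 : x ≠ 0)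
    (a b : K) (n k l : ℕ) (hn : 1 ≤ n) (hk : k ≤ n - 1) (hl : l ≤ n + 1) :
    x * Mmat x a b (n + 1) (k + 1) (l : ℤ) - Mmat x a b n k ((l : ℤ) - 1)
      = x * Mmat x a b (n + 1) k (l : ℤ) :=
  Mmat_recurrence_two_general x hx0 a b n k l hn hk
end

section
/- Define K_n^± = (i/2)(I_n ± 2 sin γ · L_n^z) and q = e^{iγ} with sin γ ≠ 0. Then the discrete Landau–Lifshitz recurrence relations for the XXZ case (equivalently, the six relations among L_n^±, L_n^z, I_n listed in the paper) imply the inhomogeneous quantum-group relations: K_n^+ L_{n+1}^± = q^{±1} L_n^± K_{n+1}^+, K_n^− L_{n+1}^± = q^{∓1} L_n^± K_{n+1}^−, L_n^+ L_{n+1}^− − L_n^− L_{n+1}^+ = (K_n^+ K_{n+1}^+ − K_n^− K_{n+1}^−)/(q − q^{−1}), and K_n^+ K_{n+1}^− = K_n^− K_{n+1}^+. -/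
open Matrix

/-- With K_n^± = (i/2)(I_n ± 2 sin γ · L_n^z) and q = e^{iγ}, sin γ ≠ 0, the six XXZ
    relations among L_n^±, L_n^z, I_n imply the inhomogeneous quantum-group relations. -/
theorem xxz_relations_imply_inhomogeneous_quantum_group
    (a b c : ℕ) (γ : ℂ) (hsin : Complex.sin γ ≠ 0)
    (Lp Lm Lz In : Matrix (Fin a) (Fin b) ℂ)
    (Lp' Lm' Lz' In' : Matrix (Fin b) (Fin c) ℂ)
    -- the assumed XXZ relations
    (h1 : Lp * Lm' - Lm * Lp' = Complex.I • (Lz * In'))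
    (h2 : Lp * Lm' - Lm * Lp' = Complex.I • (In * Lz'))
    (h3p : Lz * Lp' - Complex.cos γ • (Lp * Lz') = (Complex.I / 2) • (Lp * In'))
    (h3m : Lz * Lm' - Complex.cos γ • (Lm * Lz') = (-(Complex.I / 2)) • (Lm * In'))
    (h4p : Complex.cos γ • (Lz * Lp') - Lp * Lz' = (Complex.I / 2) • (In * Lp'))
    (h4m : Complex.cos γ • (Lz * Lm') - Lm * Lz' = (-(Complex.I / 2)) • (In * Lm')) :
    -- the inhomogeneous quantum-group relations, with q = e^{iγ}
    (let q : ℂ := Complex.exp (Complex.I * γ)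
     let Kp : Matrix (Fin a) (Fin b) ℂ :=
       (Complex.I / 2) • (In + (2 * Complex.sin γ) • Lz)
     let Km : Matrix (Fin a) (Fin b) ℂ :=
       (Complex.I / 2) • (In - (2 * Complex.sin γ) • Lz)
     let Kp' : Matrix (Fin b) (Fin c) ℂ :=
       (Complex.I / 2) • (In' + (2 * Complex.sin γ) • Lz')
     let Km' : Matrix (Fin b) (Fin c) ℂ :=
       (Complex.I / 2) • (In' - (2 * Complex.sin γ) • Lz')
     Kp * Lp' = q • (Lp * Kp') ∧
     Kp * Lm' = q⁻¹ • (Lm * Kp') ∧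
     Km * Lp' = q⁻¹ • (Lp * Km') ∧
     Km * Lm' = q • (Lm * Km') ∧
     Lp * Lm' - Lm * Lp' = (q - q⁻¹)⁻¹ • (Kp * Kp' - Km * Km') ∧
     Kp * Km' = Km * Kp') := by
  have hq : Complex.exp (Complex.I * γ) = Complex.cos γ + Complex.sin γ * Complex.I := by
    rw [mul_comm, Complex.exp_mul_I]
  have hqi : (Complex.exp (Complex.I * γ))⁻¹
      = Complex.cos γ - Complex.sin γ * Complex.I := by
    rw [← Complex.exp_neg, show -(Complex.I * γ) = (-γ) * Complex.I by ring,
      Complex.exp_mul_I, Complex.cos_neg, Complex.sin_neg]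
    ring
  dsimp only
  rw [hqi, hq]
  set s := Complex.sin γ
  set cc := Complex.cos γ
  refine ⟨?_, ?_, ?_, ?_, ?_, ?_⟩
  · simp only [Matrix.add_mul, Matrix.mul_add, Matrix.smul_mul, Matrix.mul_smul,
      Matrix.sub_mul, Matrix.mul_sub, smul_add, smul_sub, smul_smul]
    linear_combination (norm := match_scalars) (cc + s * Complex.I) • h3p - h4p <;>
      first
      | ring1
      | linear_combination (-(s^2)) * Complex.I_sq + Complex.sin_sq_add_cos_sq γ
      | linear_combination (s^2) * Complex.I_sq - Complex.sin_sq_add_cos_sq γ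
  · simp only [Matrix.add_mul, Matrix.mul_add, Matrix.smul_mul, Matrix.mul_smul,
      Matrix.sub_mul, Matrix.mul_sub, smul_add, smul_sub, smul_smul]
    linear_combination (norm := match_scalars) h4m - (cc - s * Complex.I) • h3m <;>
      first
      | ring1
      | linear_combination (-(s^2)) * Complex.I_sq + Complex.sin_sq_add_cos_sq γ
      | linear_combination (s^2) * Complex.I_sq - Complex.sin_sq_add_cos_sq γ
  · simp only [Matrix.add_mul, Matrix.mul_add, Matrix.smul_mul, Matrix.mul_smul,
      Matrix.sub_mul, Matrix.mul_sub, smul_add, smul_sub, smul_smul]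
    linear_combination (norm := match_scalars) (cc - s * Complex.I) • h3p - h4p <;>
      first
      | ring1
      | linear_combination (-(s^2)) * Complex.I_sq + Complex.sin_sq_add_cos_sq γ
      | linear_combination (s^2) * Complex.I_sq - Complex.sin_sq_add_cos_sq γ
  · simp only [Matrix.add_mul, Matrix.mul_add, Matrix.smul_mul, Matrix.mul_smul,
      Matrix.sub_mul, Matrix.mul_sub, smul_add, smul_sub, smul_smul]
    linear_combination (norm := match_scalars) h4m - (cc + s * Complex.I) • h3m <;>
      first
      | ring1
      | linear_combination (-(s^2)) * Complex.I_sq + Complex.sin_sq_add_cos_sq γ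
      | linear_combination (s^2) * Complex.I_sq - Complex.sin_sq_add_cos_sq γ
  · rw [show cc + s * Complex.I - (cc - s * Complex.I) = (2 * s) * Complex.I by ring]
    have hne : (2 * s) * Complex.I ≠ 0 :=
      mul_ne_zero (mul_ne_zero two_ne_zero hsin) Complex.I_ne_zero
    rw [eq_comm, inv_smul_eq_iff₀ hne]
    simp only [Matrix.add_mul, Matrix.mul_add, Matrix.smul_mul, Matrix.mul_smul,
      Matrix.sub_mul, Matrix.mul_sub, smul_add, smul_sub, smul_smul]
    linear_combination (norm := match_scalars) (-(s * Complex.I)) • h1 - (s * Complex.I) • h2 <;>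
      ring1
  · simp only [Matrix.add_mul, Matrix.mul_add, Matrix.smul_mul, Matrix.mul_smul,
      Matrix.sub_mul, Matrix.mul_sub, smul_add, smul_sub, smul_smul]
    linear_combination (norm := match_scalars) (s * Complex.I) • h2 - (s * Complex.I) • h1 <;>
      ring1
end
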